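/- arXiv:1105.2792 — 4 statements merged into one kernel-verified Lean document; each statement's English description precedes it below -/
import Mathlib

section
/- Let G be a field, let q_1, …, q_n be distinct prime numbers, and let A_1, …, A_n ∈ G be such that for each i the polynomial T^{q_i} − A_i has no root in G. Then [G(A_1^{1/q_1}, …, A_n^{1/q_n}) : G] = q_1 ⋯ q_n, where A_i^{1/q_i} denotes a root of T^{q_i} − A_i in a fixed algebraic closure of G. -/
set_option maxHeartbeats 1000000

open Polynomial IntermediateField Module

theorem aux3 (G : Type*) [Field G] (N : ℕ) (q : Fin N → ℕ)
    (hqprime : ∀ i, (q i).Prime) (hqdist : Function.Injective q)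
    (A : Fin N → G) (hA : ∀ i, ∀ y : G, y ^ (q i) ≠ A i)
    (β : Fin N → AlgebraicClosure G)
    (hβ : ∀ i, (β i) ^ (q i) = algebraMap G (AlgebraicClosure G) (A i)) :
    FiniteDimensional G (IntermediateField.adjoin G (Set.range β)) ∧
      Module.finrank G ↥(IntermediateField.adjoin G (Set.range β)) = ∏ i, q i := by
  induction N with
  | zero =>
    rw [Set.range_eq_empty, IntermediateField.adjoin_empty]
    exact ⟨by infer_instance, by simp [IntermediateField.finrank_bot]⟩
  | succ N ih =>
    obtain ⟨hfinL, hrankL⟩ := ih (fun i => q i.succ) (fun i => hqprime i.succ)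
      (fun i j h => Fin.succ_injective _ (hqdist h)) (fun i => A i.succ)
      (fun i => hA i.succ) (fun i => β i.succ) (fun i => hβ i.succ)
    set x := β 0 with hx
    set L := IntermediateField.adjoin G (Set.range fun i : Fin N => β i.succ) with hL
    have hq0 : q 0 ≠ 0 := (hqprime 0).ne_zero
    -- minpoly of x over G
    have hint : IsIntegral G x :=
      ⟨X ^ q 0 - C (A 0), monic_X_pow_sub_C _ hq0, by
        simp [hx, hβ 0, sub_eq_zero]⟩
    have hmin : minpoly G x = X ^ q 0 - C (A 0) := by
      have h0 : (aeval x) (X ^ q 0 - C (A 0)) = 0 := by simp [hx, hβ 0, sub_eq_zero]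
      exact minpoly.eq_of_irreducible_of_monic
        (X_pow_sub_C_irreducible_of_prime (hqprime 0) (fun y => hA 0 y)) h0
        (monic_X_pow_sub_C _ hq0) |>.symm
    have hdeg0 : finrank G G⟮x⟯ = q 0 := by
      rw [IntermediateField.adjoin.finrank hint, hmin, natDegree_X_pow_sub_C]
    -- x over L
    have hintL : IsIntegral L x :=
      ⟨X ^ q 0 - C (algebraMap G L (A 0)), monic_X_pow_sub_C _ hq0, by
        simp [← IsScalarTower.algebraMap_apply, hx, hβ 0, sub_eq_zero]⟩
    haveI : FiniteDimensional L L⟮x⟯ := IntermediateField.adjoin.finiteDimensional hintL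
    set d := finrank L L⟮x⟯ with hd
    have hdle : d ≤ q 0 := by
      rw [hd, IntermediateField.adjoin.finrank hintL]
      have hdvd : minpoly L x ∣ X ^ q 0 - C (algebraMap G L (A 0)) :=
        minpoly.dvd _ _ (by simp [← IsScalarTower.algebraMap_apply, hx, hβ 0, sub_eq_zero])
      have := Polynomial.natDegree_le_of_dvd hdvd (monic_X_pow_sub_C _ hq0).ne_zero
      simpa [natDegree_X_pow_sub_C] using this
    -- identify the total field
    have hT : IntermediateField.adjoin G (Set.range β) =
        (IntermediateField.adjoin L {x}).restrictScalars G := by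
      have hranges : Set.range β = insert x (Set.range fun i : Fin N => β i.succ) :=
        Fin.range_fin_succ β
      rw [IntermediateField.adjoin_adjoin_left, Set.union_comm, ← Set.insert_eq, hranges]
    haveI : FiniteDimensional G (IntermediateField.adjoin L {x}) :=
      FiniteDimensional.trans G L L⟮x⟯
    have hrankT : finrank G (IntermediateField.adjoin G (Set.range β)) =
        (∏ i : Fin N, q i.succ) * d := by
      rw [hT]
      have : finrank G ((IntermediateField.adjoin L {x}).restrictScalars G) =
          finrank G (IntermediateField.adjoin L {x}) := rfl
      rw [this, ← hrankL, hd]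
      exact (Module.finrank_mul_finrank G L L⟮x⟯).symm
    haveI : FiniteDimensional G (IntermediateField.adjoin G (Set.range β)) := by
      rw [hT]; exact ‹FiniteDimensional G (IntermediateField.adjoin L {x})›
    -- divisibility
    have hle : G⟮x⟯ ≤ IntermediateField.adjoin G (Set.range β) :=
      IntermediateField.adjoin_simple_le_iff.mpr
        (IntermediateField.subset_adjoin _ _ ⟨0, rfl⟩)
    have hdvdT : q 0 ∣ finrank G (IntermediateField.adjoin G (Set.range β)) := by
      rw [← hdeg0]
      exact ⟨_, (IntermediateField.finrank_bot_mul_relfinrank hle).symm⟩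
    have hcop : Nat.Coprime (q 0) (∏ i : Fin N, q i.succ) := by
      rw [Nat.Prime.coprime_iff_not_dvd (hqprime 0)]
      intro hdvd
      obtain ⟨i, _, hi⟩ := ((hqprime 0).prime.dvd_finset_prod_iff _).mp hdvd
      have := (Nat.prime_dvd_prime_iff_eq (hqprime 0) (hqprime i.succ)).mp hi
      exact (Fin.succ_ne_zero i).symm (hqdist this)
    have hq0d : q 0 ∣ d := by
      rw [hrankT] at hdvdT
      exact (Nat.Coprime.dvd_of_dvd_mul_left hcop hdvdT)
    have hdq : d = q 0 :=
      le_antisymm hdle (Nat.le_of_dvd finrank_pos hq0d)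
    refine ⟨‹_›, ?_⟩
    rw [hrankT, hdq, Fin.prod_univ_succ, mul_comm]


/-- Corollary `cor:totdegree`: Let `G` be a field, `q₁, …, q_N` distinct
prime numbers (each different from the characteristic of `G`), and `A₁, …, A_N ∈ G` such
that the polynomial `T ^ qᵢ - Aᵢ` has no root in `G`.  If `βᵢ` is a root of `T ^ qᵢ - Aᵢ`
in a fixed algebraic closure of `G`, then `[G(β₁, …, β_N) : G] = q₁ ⋯ q_N`. -/
theorem stmt_3 (G : Type*) [Field G] (N : ℕ) (q : Fin N → ℕ)
    (hqprime : ∀ i, (q i).Prime) (hqdist : Function.Injective q)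
    (hchar : ∀ i, (q i : G) ≠ 0)
    (A : Fin N → G) (hA : ∀ i, ∀ y : G, y ^ (q i) ≠ A i)
    (β : Fin N → AlgebraicClosure G)
    (hβ : ∀ i, (β i) ^ (q i) = algebraMap G (AlgebraicClosure G) (A i)) :
    Module.finrank G ↥(IntermediateField.adjoin G (Set.range β)) = ∏ i, q i := by
  exact (aux3 G N q hqprime hqdist A hA β hβ).2
end

section
/- Let R be a Dedekind domain with fraction field N, let L be a finite separable field extension of N, and let S be the integral closure of R in L. Let q be a prime number such that [L : N] is not divisible by q, let p be a nonzero prime ideal of R, and let x ∈ N be a nonzero element with ord_p(x) not divisible by q. Then there exists a nonzero prime ideal P of S lying over p such that ord_P(x) is not divisible by q. -/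
open IsDedekindDomain

/-- The normalized order (additive valuation) of `x ∈ K` at a height-one prime `v` of a
Dedekind domain `R` with fraction field `K`:  `ordAt v x = n` iff the exponent of `v` in the
factorization of the fractional ideal generated by `x` is `n`.  (We set `ordAt v 0 = 0`.) -/
noncomputable def ordAt {R : Type*} [CommRing R] [IsDedekindDomain R]
    {K : Type*} [Field K] [Algebra R K] [IsFractionRing R K]
    (v : HeightOneSpectrum R) (x : K) : ℤ := by
  classical exact
    if h : v.valuation K x = 0 then 0
    else - Multiplicative.toAdd (WithZero.unzero h)

section aux
open UniqueFactorizationMonoid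
variable {R : Type*} [CommRing R] [IsDedekindDomain R]
    {K : Type*} [Field K] [Algebra R K] [IsFractionRing R K] (v : HeightOneSpectrum R)

lemma ordAt_algebraMap (r : R) (hr : r ≠ 0) [DecidableEq (Ideal R)] :
    ordAt v (algebraMap R K r) =
      Multiset.count v.asIdeal (normalizedFactors (Ideal.span {r} : Ideal R)) := by
  classical
  have hval : v.valuation K (algebraMap R K r) =
      ↑(Multiplicative.ofAdd
        (-(Associates.mk v.asIdeal).count (Associates.mk (Ideal.span {r} : Ideal R)).factors : ℤ)) := by
    rw [HeightOneSpectrum.valuation_of_algebraMap, HeightOneSpectrum.intValuation_apply,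
      HeightOneSpectrum.intValuationDef_if_neg _ hr]
    rfl
  have h0 : v.valuation K (algebraMap R K r) ≠ 0 := by
    rw [hval]; exact WithZero.coe_ne_zero
  have hcnt : (Associates.mk v.asIdeal).count (Associates.mk (Ideal.span {r} : Ideal R)).factors
      = Multiset.count v.asIdeal (normalizedFactors (Ideal.span {r} : Ideal R)) := by
    convert count_associates_factors_eq (I := Ideal.span {r})
      (by simpa [Ideal.span_singleton_eq_bot] using hr) v.isPrime v.ne_bot
  have hun : WithZero.unzero h0 = Multiplicative.ofAdd
      (-(Associates.mk v.asIdeal).count (Associates.mk (Ideal.span {r} : Ideal R)).factors : ℤ) := by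
    have h2 := (WithZero.coe_unzero h0).trans hval
    exact_mod_cast h2
  unfold ordAt
  rw [dif_neg h0, hun, ← hcnt]
  simp

lemma ordAt_mul (x y : K) (hx : x ≠ 0) (hy : y ≠ 0) :
    ordAt v (x * y) = ordAt v x + ordAt v y := by
  have h0x : v.valuation K x ≠ 0 := (Valuation.ne_zero_iff _).mpr hx
  have h0y : v.valuation K y ≠ 0 := (Valuation.ne_zero_iff _).mpr hy
  have h0xy : v.valuation K (x * y) ≠ 0 := (Valuation.ne_zero_iff _).mpr (mul_ne_zero hx hy)
  have hun : WithZero.unzero h0xy = WithZero.unzero h0x * WithZero.unzero h0y := by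
    rw [← WithZero.unzero_mul (x := v.valuation K x) (y := v.valuation K y) (by rw [← map_mul]; exact h0xy)]
    congr 1
    exact map_mul _ _ _
  unfold ordAt
  rw [dif_neg h0xy, dif_neg h0x, dif_neg h0y, hun]
  simp only [toAdd_mul]
  ring

end aux

section count
open UniqueFactorizationMonoid Ideal
variable {R : Type*} [CommRing R] [IsDedekindDomain R]
    {S : Type*} [CommRing S] [IsDedekindDomain S] [Algebra R S]
    (hinj : Function.Injective (algebraMap R S))
    (v : HeightOneSpectrum R) (w : HeightOneSpectrum S)
    (hvw : w.asIdeal.comap (algebraMap R S) = v.asIdeal)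

include hinj hvw in
lemma count_map_eq [DecidableEq (Ideal R)] [DecidableEq (Ideal S)] (I : Ideal R) (hI : I ≠ 0) :
    Multiset.count w.asIdeal (normalizedFactors (Ideal.map (algebraMap R S) I)) =
      Ideal.ramificationIdx' v.asIdeal w.asIdeal *
        Multiset.count v.asIdeal (normalizedFactors I) := by
  have hmapne : ∀ J : Ideal R, J ≠ 0 → Ideal.map (algebraMap R S) J ≠ 0 := by
    intro J hJ
    obtain ⟨a, haJ, ha0⟩ := Submodule.exists_mem_ne_zero_of_ne_bot hJ
    intro hbot
    have : algebraMap R S a ∈ Ideal.map (algebraMap R S) J := Ideal.mem_map_of_mem _ haJ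
    rw [hbot] at this
    exact ha0 (hinj (by simpa using this))
  induction I using UniqueFactorizationMonoid.induction_on_prime with
  | h₁ => exact absurd rfl hI
  | h₂ x hx =>
    rw [Ideal.isUnit_iff] at hx
    subst hx
    have h1 : (normalizedFactors (⊤ : Ideal S)) = 0 := by
      rw [← Ideal.one_eq_top]; exact normalizedFactors_one
    have h2 : (normalizedFactors (⊤ : Ideal R)) = 0 := by
      rw [← Ideal.one_eq_top]; exact normalizedFactors_one
    rw [Ideal.map_top]
    simp [h1, h2]
  | h₃ a b ha hp ih =>
    have hp0 : b ≠ 0 := hp.ne_zero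
    rw [Ideal.map_mul, normalizedFactors_mul (hmapne b hp0) (hmapne a ha),
      normalizedFactors_mul hp0 ha, Multiset.count_add, Multiset.count_add, ih ha,
      Nat.mul_add]
    congr 1
    -- count of w in factors of map b = e * count of v in factors of p
    have hpprime : b.IsPrime := Ideal.isPrime_of_prime hp
    have hpfac : normalizedFactors b = {b} := by
      rw [normalizedFactors_irreducible hp.irreducible, normalize_eq]
    rw [hpfac]
    by_cases hpv : b = v.asIdeal
    · subst hpv
      rw [Multiset.count_singleton_self, mul_one]
      convert (IsDedekindDomain.ramificationIdx'_eq_normalizedFactors_count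
        (hmapne v.asIdeal hp0) w.isPrime w.ne_bot).symm
    · rw [Multiset.count_singleton, if_neg (fun h => hpv h.symm), mul_zero]
      rw [Multiset.count_eq_zero]
      intro hmem
      apply hpv
      have hle : Ideal.map (algebraMap R S) b ≤ w.asIdeal :=
        Ideal.le_of_dvd (dvd_of_mem_normalizedFactors hmem)
      have hle2 : b ≤ w.asIdeal.comap (algebraMap R S) := Ideal.map_le_iff_le_comap.mp hle
      rw [hvw] at hle2
      have hmax : b.IsMaximal := hpprime.isMaximal hp0
      exact (hmax.eq_of_le v.isPrime.ne_top hle2)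

end count

section ext
open UniqueFactorizationMonoid Ideal
variable {R N L S : Type*} [CommRing R] [IsDedekindDomain R]
    [Field N] [Field L] [Algebra R N] [IsFractionRing R N]
    [Algebra N L]
    [CommRing S] [IsDedekindDomain S] [Algebra R S] [Algebra S L] [Algebra R L]
    [IsScalarTower R S L] [IsScalarTower R N L] [IsFractionRing S L]

lemma ordAt_ext (v : HeightOneSpectrum R) (w : HeightOneSpectrum S)
    (hvw : w.asIdeal.comap (algebraMap R S) = v.asIdeal)
    (x : N) (hx : x ≠ 0) :
    ordAt w (algebraMap N L x) =
      Ideal.ramificationIdx' v.asIdeal w.asIdeal * ordAt v x := by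
  classical
  have hinjNL : Function.Injective (algebraMap N L) := (algebraMap N L).injective
  have hinjRL : Function.Injective (algebraMap R L) := by
    rw [IsScalarTower.algebraMap_eq R N L]
    exact hinjNL.comp (IsFractionRing.injective R N)
  have hinjRS : Function.Injective (algebraMap R S) := by
    have := hinjRL
    rw [IsScalarTower.algebraMap_eq R S L] at this
    exact Function.Injective.of_comp this
  -- key: for t : R, t ≠ 0, ordAt w of the image of t equals e * ordAt v t
  have key : ∀ t : R, t ≠ 0 →
      ordAt w (algebraMap N L (algebraMap R N t)) =
        Ideal.ramificationIdx' v.asIdeal w.asIdeal *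
          ordAt v (algebraMap R N t) := by
    intro t ht
    have heq : algebraMap N L (algebraMap R N t) = algebraMap S L (algebraMap R S t) := by
      rw [← IsScalarTower.algebraMap_apply, ← IsScalarTower.algebraMap_apply]
    have hst : algebraMap R S t ≠ 0 := fun h => ht (hinjRS (by simpa using h))
    rw [heq, ordAt_algebraMap w _ hst, ordAt_algebraMap v t ht]
    have hspan : (Ideal.span {algebraMap R S t} : Ideal S) =
        Ideal.map (algebraMap R S) (Ideal.span {t}) := by
      rw [Ideal.map_span, Set.image_singleton]
    rw [hspan, count_map_eq hinjRS v w hvw _ (by simpa [Ideal.span_singleton_eq_bot] using ht)]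
    push_cast
    ring
  obtain ⟨r, s, hs, hrs⟩ := IsFractionRing.div_surjective (A := R) x
  have hs0 : s ≠ 0 := nonZeroDivisors.ne_zero hs
  have hsN : algebraMap R N s ≠ 0 := fun h => hs0 ((IsFractionRing.injective R N) (by simpa using h))
  have hr0 : r ≠ 0 := by
    intro h
    apply hx
    rw [← hrs, h, map_zero, zero_div]
  have hxmul : x * algebraMap R N s = algebraMap R N r := by
    rw [← hrs, div_mul_cancel₀]
    exact hsN
  have hN : ordAt v x + ordAt v (algebraMap R N s) = ordAt v (algebraMap R N r) := by
    rw [← ordAt_mul v _ _ hx hsN, hxmul]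
  have hxL : algebraMap N L x ≠ 0 := fun h => hx (hinjNL (by simpa using h))
  have hsL : algebraMap N L (algebraMap R N s) ≠ 0 := fun h => hsN (hinjNL (by simpa using h))
  have hL : ordAt w (algebraMap N L x) + ordAt w (algebraMap N L (algebraMap R N s)) =
      ordAt w (algebraMap N L (algebraMap R N r)) := by
    rw [← ordAt_mul w _ _ hxL hsL, ← _root_.map_mul, hxmul]
  rw [key s hs0, key r hr0, ← hN] at hL
  linarith [hL]

end ext

/-- Corollary `cor:ef2`: Let `R` be a Dedekind domain with fraction field
`N`, `L` a finite separable extension of `N`, and `S` the integral closure of `R` in `L`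
(a Dedekind domain with fraction field `L`).  Let `q` be a prime number not dividing
`[L : N]`, let `p` be a nonzero prime of `R` (a height-one prime `v`), and let `x ∈ N` be a
nonzero element with `ord_p(x)` not divisible by `q`.  Then there is a nonzero prime `P` of
`S` lying over `p` with `ord_P(x)` not divisible by `q`. -/
theorem stmt_5 (R N L S : Type*) [CommRing R] [IsDedekindDomain R]
    [Field N] [Field L] [Algebra R N] [IsFractionRing R N]
    [Algebra N L] [FiniteDimensional N L] [Algebra.IsSeparable N L]
    [CommRing S] [IsDedekindDomain S] [Algebra R S] [Algebra S L] [Algebra R L]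
    [IsScalarTower R S L] [IsScalarTower R N L]
    [IsIntegralClosure S R L] [IsFractionRing S L]
    (q : ℕ) (hq : q.Prime) (hdeg : ¬ q ∣ Module.finrank N L)
    (v : HeightOneSpectrum R)
    (x : N) (hx : x ≠ 0) (hordx : ¬ (q : ℤ) ∣ ordAt v x) :
    ∃ w : HeightOneSpectrum S, w.asIdeal.comap (algebraMap R S) = v.asIdeal ∧
      ¬ (q : ℤ) ∣ ordAt w (algebraMap N L x) := by
  classical
  haveI : Module.Finite R S := IsIntegralClosure.finite R N L S
  haveI : v.asIdeal.IsMaximal := v.isPrime.isMaximal v.ne_bot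
  have hsum := Ideal.sum_ramification_inertia (R := R) (S := S) N L v.ne_bot
  -- find a factor P with q not dividing e(P) * f(P)
  have : ∃ P ∈ (UniqueFactorizationMonoid.factors
      (Ideal.map (algebraMap R S) v.asIdeal)).toFinset,
      ¬ q ∣ Ideal.ramificationIdx' v.asIdeal P *
        Ideal.inertiaDeg' v.asIdeal P := by
    by_contra hall
    push_neg at hall
    exact hdeg (hsum ▸ Finset.dvd_sum hall)
  obtain ⟨P, hPmem, hPnd⟩ := this
  have hPfac : P ∈ UniqueFactorizationMonoid.factors
      (Ideal.map (algebraMap R S) v.asIdeal) := Multiset.mem_toFinset.mp hPmem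
  have hPprime : Prime P := UniqueFactorizationMonoid.prime_of_factor _ hPfac
  have hP0 : P ≠ ⊥ := hPprime.ne_zero
  have hPisPrime : P.IsPrime := Ideal.isPrime_of_prime hPprime
  set w : HeightOneSpectrum S := ⟨P, hPisPrime, hP0⟩ with hw
  have hcomap : w.asIdeal.comap (algebraMap R S) = v.asIdeal := by
    have hle : Ideal.map (algebraMap R S) v.asIdeal ≤ P :=
      Ideal.le_of_dvd (UniqueFactorizationMonoid.dvd_of_mem_factors hPfac)
    have hle2 : v.asIdeal ≤ P.comap (algebraMap R S) := Ideal.map_le_iff_le_comap.mp hle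
    haveI := hPisPrime
    exact ((‹v.asIdeal.IsMaximal›).eq_of_le (Ideal.comap_ne_top _ hPisPrime.ne_top) hle2).symm
  refine ⟨w, hcomap, ?_⟩
  rw [ordAt_ext v w hcomap x hx]
  have hqZ : Prime (q : ℤ) := Nat.prime_iff_prime_int.mp hq
  intro hdvd
  rcases hqZ.dvd_mul.mp hdvd with h | h
  · have : q ∣ Ideal.ramificationIdx' v.asIdeal w.asIdeal := by
      exact_mod_cast h
    exact hPnd (Dvd.dvd.mul_right this _)
  · exact hordx h
end

section
/- Let G be a field, C ⊆ G a subfield, and v a discrete valuation on G trivial on C. Let R(T) = A(T)/B(T) with A(T) = ∏_{i=1}^m (T−c_i)^{n_i} and B(T) = ∏_{i=1}^k (T−b_i)^{j_i}, where c_1,…,c_m,b_1,…,b_k ∈ C are pairwise distinct and the n_i, j_i are positive integers; set 𝚁 = {c_1,…,c_m,b_1,…,b_k} and for c ∈ 𝚁 set n(c) = n_i if c = c_i and n(c) = −j_i if c = b_i. Let q be a prime number with deg A − deg B ≢ 0 (mod q), let w ∈ G ∖ C and u ∈ C. Then v(R(w−u)) ≢ 0 (mod q) if and only if one of the following holds: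 (i) v(w) ≥ 0 and there exists c ∈ 𝚁 with n(c)·v(w−u−c) ≢ 0 (mod q); or (ii) v(w) < 0 and there exists c ∈ 𝚁 with v(w−u−c) ≢ 0 (mod q). -/
/-- Evaluation of the rational function `R(T) = ∏ (T - cᵢ)^{nᵢ} / ∏ (T - bᵢ)^{jᵢ}`
(with coefficients in a subfield `C`) at a point `x` of a field extension `G` of `C`. -/
noncomputable def ratEval {C G : Type*} [Field C] [Field G] [Algebra C G] {m k : ℕ}
    (c : Fin m → C) (b : Fin k → C) (n : Fin m → ℕ) (j : Fin k → ℕ) (x : G) : G :=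
  (∏ i, (x - algebraMap C G (c i)) ^ n i) / (∏ i, (x - algebraMap C G (b i)) ^ j i)

/-- A value in `ℤ ∪ {∞}` is finite and divisible by `q` ("≡ 0 (mod q)"). -/
def valDvd (q : ℕ) (x : WithTop ℤ) : Prop :=
  ∃ z : ℤ, x = (z : WithTop ℤ) ∧ (q : ℤ) ∣ z

private lemma addval_prod {G : Type*} [Field G] (v : AddValuation G (WithTop ℤ))
    {ι : Type*} (s : Finset ι) (f : ι → G) (z : ι → ℤ)
    (h : ∀ i ∈ s, v (f i) = (z i : WithTop ℤ)) :
    v (∏ i ∈ s, f i) = ((∑ i ∈ s, z i : ℤ) : WithTop ℤ) := by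
  classical
  induction s using Finset.induction with
  | empty => simp
  | @insert a s hx ih =>
      rw [Finset.prod_insert hx, Finset.sum_insert hx, v.map_mul,
        h _ (Finset.mem_insert_self a s), ih (fun i hi => h i (Finset.mem_insert_of_mem hi))]
      push_cast
      ring

/-- Lemma `le:notq`, part 2: with `v` a discrete valuation on `G` trivial
on the subfield `C`, `R(T) = ∏ (T - cᵢ)^{nᵢ} / ∏ (T - bᵢ)^{jᵢ}` over `C` as usual, `q` a
prime with `deg A - deg B ≢ 0 (mod q)`, `w ∈ G ∖ C`, and `u ∈ C`:
`v(R(w - u)) ≢ 0 (mod q)` iff (i) `v(w) ≥ 0` and some `c ∈ 𝚁` has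
`n(c)·v(w - u - c) ≢ 0 (mod q)`, or (ii) `v(w) < 0` and some `c ∈ 𝚁` has
`v(w - u - c) ≢ 0 (mod q)`. -/
theorem stmt_12 (C G : Type*) [Field C] [Field G] [Algebra C G]
    (v : AddValuation G (WithTop ℤ))
    (hsurj : ∀ z : ℤ, ∃ x : G, v x = (z : WithTop ℤ))
    (htriv : ∀ c : C, c ≠ 0 → v (algebraMap C G c) = 0)
    (m k : ℕ) (c : Fin m → C) (b : Fin k → C) (n : Fin m → ℕ) (j : Fin k → ℕ)
    (hdist : Function.Injective (Sum.elim c b))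
    (hn : ∀ i, 0 < n i) (hj : ∀ i, 0 < j i)
    (q : ℕ) (hq : q.Prime)
    (hdeg : ¬ (q : ℤ) ∣ ((∑ i, (n i : ℤ)) - ∑ i, (j i : ℤ)))
    (w : G) (hw : w ∉ Set.range (algebraMap C G)) (u : C) :
    ¬ valDvd q (v (ratEval c b n j (w - algebraMap C G u))) ↔
      ((0 ≤ v w ∧ ∃ i : Fin m ⊕ Fin k, ∃ z : ℤ,
          v (w - algebraMap C G u - algebraMap C G (Sum.elim c b i)) = (z : WithTop ℤ) ∧
          ¬ (q : ℤ) ∣ (Sum.elim (fun i₀ => (n i₀ : ℤ)) (fun i₀ => -(j i₀ : ℤ)) i) * z) ∨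
       (v w < 0 ∧ ∃ i : Fin m ⊕ Fin k,
          ¬ valDvd q (v (w - algebraMap C G u - algebraMap C G (Sum.elim c b i))))) := by
  classical
  set φ := algebraMap C G with hφ
  have hqZ : Prime (q : ℤ) := Nat.prime_iff_prime_int.mp hq
  -- basic nonvanishing
  have hwsub : ∀ x : C, w - φ x ≠ 0 := by
    intro x h
    exact hw ⟨x, (sub_eq_zero.mp h).symm⟩
  have hw0 : w ≠ 0 := by simpa using hwsub 0
  -- integer-valued valuation
  set V : G → ℤ := fun x => WithTop.untopD 0 (v x) with hVdef
  have hVv : ∀ x : G, x ≠ 0 → v x = (V x : WithTop ℤ) := by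
    intro x hx
    have hne : v x ≠ ⊤ := v.ne_top_iff.mpr hx
    cases hvx : v x with
    | top => exact absurd hvx hne
    | coe z => simp [hVdef, hvx]
  have hvw : v w = (V w : WithTop ℤ) := hVv w hw0
  -- valDvd on finite values
  have hvd : ∀ z : ℤ, valDvd q (z : WithTop ℤ) ↔ (q : ℤ) ∣ z := by
    intro z
    constructor
    · rintro ⟨z', h1, h2⟩
      rwa [WithTop.coe_inj.mp h1]
    · exact fun h => ⟨z, rfl, h⟩
  -- the combined data
  set d : Fin m ⊕ Fin k → C := Sum.elim c b with hd
  set N : Fin m ⊕ Fin k → ℤ := Sum.elim (fun i₀ => (n i₀ : ℤ)) (fun i₀ => -(j i₀ : ℤ)) with hN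
  have hrw : ∀ i : Fin m ⊕ Fin k, w - φ u - φ (d i) = w - φ (u + d i) := by
    intro i; rw [map_add, sub_sub]
  -- value of each power factor
  have hpow : ∀ (x : C) (e : ℕ),
      v ((w - φ u - φ x) ^ e) = (((e : ℤ) * V (w - φ (u + x)) : ℤ) : WithTop ℤ) := by
    intro x e
    have h1 : w - φ u - φ x = w - φ (u + x) := by rw [map_add, sub_sub]
    rw [h1, v.map_pow, hVv _ (hwsub _), ← WithTop.coe_nsmul]
    congr 1
  have hnum : v (∏ i, (w - φ u - φ (c i)) ^ n i)
      = ((∑ i, (n i : ℤ) * V (w - φ (u + c i)) : ℤ) : WithTop ℤ) :=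
    addval_prod v _ _ _ (fun i _ => hpow (c i) (n i))
  have hden : v (∏ i, (w - φ u - φ (b i)) ^ j i)
      = ((∑ i, (j i : ℤ) * V (w - φ (u + b i)) : ℤ) : WithTop ℤ) :=
    addval_prod v _ _ _ (fun i _ => hpow (b i) (j i))
  set S : ℤ := ∑ i : Fin m ⊕ Fin k, N i * V (w - φ (u + d i)) with hS
  have hSsplit : S = (∑ i, (n i : ℤ) * V (w - φ (u + c i)))
      - (∑ i, (j i : ℤ) * V (w - φ (u + b i))) := by
    rw [hS, Fintype.sum_sum_type, sub_eq_add_neg, ← Finset.sum_neg_distrib]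
    congr 1
    exact Finset.sum_congr rfl fun i _ => by simp [hN, hd, neg_mul]
  have hfac : ∀ x : C, w - φ u - φ x ≠ 0 := by
    intro x
    rw [sub_sub, ← map_add]
    exact hwsub _
  have hnum0 : (∏ i, (w - φ u - φ (c i)) ^ n i) ≠ 0 :=
    Finset.prod_ne_zero_iff.mpr fun i _ => pow_ne_zero _ (hfac (c i))
  have hden0 : (∏ i, (w - φ u - φ (b i)) ^ j i) ≠ 0 :=
    Finset.prod_ne_zero_iff.mpr fun i _ => pow_ne_zero _ (hfac (b i))
  have hR0 : ratEval c b n j (w - φ u) ≠ 0 := by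
    unfold ratEval
    rw [← hφ]
    exact div_ne_zero hnum0 hden0
  have hmul : ratEval c b n j (w - φ u) * (∏ i, (w - φ u - φ (b i)) ^ j i)
      = ∏ i, (w - φ u - φ (c i)) ^ n i := by
    unfold ratEval
    rw [← hφ]
    exact div_mul_cancel₀ _ hden0
  have hvR : v (ratEval c b n j (w - φ u)) = (S : WithTop ℤ) := by
    have h1 := congrArg v hmul
    rw [v.map_mul, hVv _ hR0, hden, hnum, ← WithTop.coe_add, WithTop.coe_inj] at h1
    rw [hVv _ hR0, WithTop.coe_inj]
    linarith [hSsplit]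
  rw [hvR, hvd]
  rcases lt_or_ge (v w) 0 with hneg | hpos
  · -- case v w < 0
    have hVwneg : V w < 0 := by
      rw [hvw] at hneg
      exact_mod_cast hneg
    have hsame : ∀ x : C, V (w - φ x) = V w := by
      intro x
      by_cases hx : x = 0
      · rw [hx, map_zero, sub_zero]
      · have h2 : v (w - φ x) = v w := by
          refine v.map_sub_eq_of_lt_left ?_
          rw [htriv x hx]; exact hneg
        simp [hVdef, h2]
    have hSval : S = ((∑ i, (n i : ℤ)) - ∑ i, (j i : ℤ)) * V w := by
      rw [hSsplit]
      simp only [hsame]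
      rw [← Finset.sum_mul, ← Finset.sum_mul, ← sub_mul]
    -- index nonempty
    have hne0 : ¬ (m = 0 ∧ k = 0) := by
      rintro ⟨rfl, rfl⟩
      simp at hdeg
    have hiex : Nonempty (Fin m ⊕ Fin k) := by
      by_cases hm : m = 0
      · have hk : k ≠ 0 := fun hk => hne0 ⟨hm, hk⟩
        exact ⟨Sum.inr ⟨0, Nat.pos_of_ne_zero hk⟩⟩
      · exact ⟨Sum.inl ⟨0, Nat.pos_of_ne_zero hm⟩⟩
    obtain ⟨i⟩ := hiex
    constructor
    · intro hS'
      right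
      have hVw : ¬ (q : ℤ) ∣ V w := fun h => hS' (by rw [hSval]; exact h.mul_left _)
      refine ⟨hneg, i, ?_⟩
      rw [hrw i, hVv _ (hwsub _), hvd, hsame]
      exact hVw
    · rintro (⟨h0, _⟩ | ⟨_, i', hi'⟩)
      · exact absurd hneg (not_lt.mpr h0)
      · rw [hrw i', hVv _ (hwsub _), hvd, hsame] at hi'
        intro hdS
        apply hi'
        rw [hSval] at hdS
        rcases hqZ.dvd_mul.mp hdS with h | h
        · exact absurd h hdeg
        · exact h
  · -- case 0 ≤ v w
    have hge : ∀ x : C, 0 ≤ V (w - φ x) := by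
      intro x
      have h0φ : (0 : WithTop ℤ) ≤ v (φ x) := by
        by_cases hx : x = 0
        · rw [hx, map_zero, v.map_zero]; exact le_top
        · rw [htriv x hx]
      have h1 : (0 : WithTop ℤ) ≤ v (w - φ x) := v.map_le_sub hpos h0φ
      rw [hVv _ (hwsub x)] at h1
      exact_mod_cast h1
    have hone : ∀ x y : C, x ≠ y → 0 < V (w - φ x) → V (w - φ y) = 0 := by
      intro x y hxy hx
      refine le_antisymm ?_ (hge y)
      by_contra h
      push_neg at h
      have h1 : (0 : WithTop ℤ) < v (w - φ x) := by
        rw [hVv _ (hwsub x)]; exact_mod_cast hx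
      have h2 : (0 : WithTop ℤ) < v (w - φ y) := by
        rw [hVv _ (hwsub y)]; exact_mod_cast h
      have h3 : (w - φ y) - (w - φ x) = φ (x - y) := by rw [map_sub]; ring
      have h5 : (0 : WithTop ℤ) < v (φ (x - y)) := by
        rw [← h3]
        exact lt_of_lt_of_le (lt_min h2 h1) (v.map_sub _ _)
      rw [htriv _ (sub_ne_zero.mpr hxy)] at h5
      exact lt_irrefl _ h5
    have hiff : (¬ (q : ℤ) ∣ S) ↔ ∃ i, ¬ (q : ℤ) ∣ N i * V (w - φ (u + d i)) := by
      constructor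
      · intro hS'
        by_contra hall
        push_neg at hall
        exact hS' (hS ▸ Finset.dvd_sum fun i _ => hall i)
      · rintro ⟨i₀, hi₀⟩ hdvdS
        have hV0 : V (w - φ (u + d i₀)) ≠ 0 := by
          intro h0
          exact hi₀ (by rw [h0, mul_zero]; exact dvd_zero _)
        have hVpos : 0 < V (w - φ (u + d i₀)) := lt_of_le_of_ne (hge _) (Ne.symm hV0)
        have hzero : ∀ i, i ≠ i₀ → N i * V (w - φ (u + d i)) = 0 := by
          intro i hi
          have hdd : u + d i₀ ≠ u + d i := fun h => hi (hdist (add_left_cancel h)).symm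
          rw [hone _ _ hdd hVpos, mul_zero]
        have hSeq : S = N i₀ * V (w - φ (u + d i₀)) := by
          rw [hS]
          exact Finset.sum_eq_single i₀ (fun i _ hi => hzero i hi)
            (fun h => absurd (Finset.mem_univ i₀) h)
        exact hi₀ (hSeq ▸ hdvdS)
    constructor
    · intro h
      left
      refine ⟨hpos, ?_⟩
      obtain ⟨i, hi⟩ := hiff.mp h
      exact ⟨i, V (w - φ (u + d i)), by rw [hrw i]; exact hVv _ (hwsub _), hi⟩
    · rintro (⟨_, i, z, hz, hzq⟩ | ⟨hlt, _⟩)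
      · refine hiff.mpr ⟨i, ?_⟩
        have hzeq : V (w - φ (u + d i)) = z := by
          rw [hrw i, hVv _ (hwsub _)] at hz
          exact_mod_cast hz
        rwa [hzeq]
      · exact absurd hlt (not_lt.mpr hpos)
end

section
/- Let G be a one-variable function field over a constant field C, and let R(T) = A(T)/B(T) with A(T) = ∏_{i=1}^m (T−c_i)^{n_i} and B(T) = ∏_{i=1}^k (T−b_i)^{j_i}, where c_1,…,c_m,b_1,…,b_k ∈ C are pairwise distinct and the n_i, j_i are positive integers. Let q be a prime number with deg A − deg B ≢ 0 (mod q) and deg A > deg B. Let a ∈ G ∖ C and let 𝒯 be a finite set of primes of G containing a pole 𝔱 of a (i.e. ord_𝔱(a) < 0). Then there exists b ∈ G ∖ C such that ord_𝔱(R(b)) ≢ 0 (mod q), while for every p ∈ 𝒯 both ord_p(R(a)^q − R(b)) ≡ 0 (mod q) and ord_p(R(a)^q − R(b)^{-1}) ≡ 0 (mod q). -/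
namespace Stmt13Aux

variable {G : Type*} [Field G]

/-- Integer value of an additive valuation (0 as junk value at 0). -/
noncomputable def nval (v : AddValuation G (WithTop ℤ)) (x : G) : ℤ := WithTop.untopD 0 (v x)

lemma coe_nval (v : AddValuation G (WithTop ℤ)) {x : G} (hx : x ≠ 0) :
    v x = ((nval v x : ℤ) : WithTop ℤ) := by
  have h := v.ne_top_iff.mpr hx
  cases hvx : v x with
  | top => exact absurd hvx h
  | coe z => simp [nval, hvx]

lemma val_pow (v : AddValuation G (WithTop ℤ)) {x : G} {z : ℤ}
    (h : v x = (z : WithTop ℤ)) (nn : ℕ) :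
    v (x ^ nn) = ((nn * z : ℤ) : WithTop ℤ) := by
  rw [v.map_pow, h, ← WithTop.coe_nsmul]
  norm_cast

lemma val_zpow (v : AddValuation G (WithTop ℤ)) {x : G} {p : ℤ}
    (h : v x = (p : WithTop ℤ)) (z : ℤ) :
    v (x ^ z) = ((z * p : ℤ) : WithTop ℤ) := by
  obtain ⟨nn, rfl | rfl⟩ := z.eq_nat_or_neg
  · rw [zpow_natCast, val_pow v h]
  · rw [zpow_neg, v.map_inv, zpow_natCast, val_pow v h,
      ← WithTop.LinearOrderedAddCommGroup.coe_neg]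
    norm_cast
    ring

lemma val_prod {ι : Type*} (v : AddValuation G (WithTop ℤ)) (s : Finset ι) (f : ι → G) :
    v (∏ i ∈ s, f i) = ∑ i ∈ s, v (f i) := by
  classical
  induction s using Finset.induction with
  | empty => simp
  | insert _ _ h ih => rw [Finset.prod_insert h, v.map_mul, ih, Finset.sum_insert h]

/-- Surjectivity of a valuation onto ℤ. -/
def Surj (v : AddValuation G (WithTop ℤ)) : Prop := ∀ z : ℤ, ∃ x : G, v x = (z : WithTop ℤ)

end Stmt13Aux

namespace Stmt13Aux

variable {G : Type*} [Field G]

lemma eq_of_same_ring {v w : AddValuation G (WithTop ℤ)} (hv : Surj v) (hw : Surj w)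
    (H : ∀ x : G, 0 ≤ v x ↔ 0 ≤ w x) : v = w := by
  obtain ⟨π, hπ⟩ := hv 1
  have hπ0 : π ≠ 0 := by
    intro h; rw [h, v.map_zero] at hπ; exact (WithTop.top_ne_coe).elim hπ
  obtain ⟨ρ, hρ⟩ := hw 1
  have hρ0 : ρ ≠ 0 := by
    intro h; rw [h, w.map_zero] at hρ; exact (WithTop.top_ne_coe).elim hρ
  set p : ℤ := nval w π with hp
  have hwπ : w π = ((p : ℤ) : WithTop ℤ) := coe_nval w hπ0
  -- key: for all nonzero x, w x = (v x) * p
  have key : ∀ x : G, x ≠ 0 → w x = ((nval v x * p : ℤ) : WithTop ℤ) := by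
    intro x hx
    set zx : ℤ := nval v x with hzx
    have hvx : v x = ((zx : ℤ) : WithTop ℤ) := coe_nval v hx
    set y : G := x * π ^ (-zx : ℤ) with hy
    have hy0 : y ≠ 0 := mul_ne_zero hx (zpow_ne_zero _ hπ0)
    have hvy : v y = 0 := by
      rw [hy, v.map_mul, hvx, val_zpow v hπ, ← WithTop.coe_add]
      norm_cast
      ring
    have hwy : w y = 0 := by
      have h1 : (0 : WithTop ℤ) ≤ w y := (H y).mp (le_of_eq hvy.symm)
      have h2 : (0 : WithTop ℤ) ≤ w y⁻¹ := by
        refine (H y⁻¹).mp ?_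
        rw [v.map_inv, hvy]; simp
      rw [w.map_inv] at h2
      have hyc : w y = ((nval w y : ℤ) : WithTop ℤ) := coe_nval w hy0
      rw [hyc] at h1 h2 ⊢
      rw [← WithTop.LinearOrderedAddCommGroup.coe_neg] at h2
      have e1 : (0:ℤ) ≤ nval w y := by exact_mod_cast h1
      have e2 : (0:ℤ) ≤ -nval w y := by exact_mod_cast h2
      norm_cast
      omega
    have hxy : x = y * π ^ (zx : ℤ) := by
      rw [hy, mul_assoc, ← zpow_add₀ hπ0]
      simp
    rw [hxy, w.map_mul, hwy, val_zpow w hwπ, zero_add]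
  -- p is nonnegative
  have hp0 : 0 ≤ p := by
    have := (H π).mp (by rw [hπ]; exact_mod_cast zero_le_one)
    rw [hwπ] at this
    exact_mod_cast this
  -- p = 1
  have hp1 : p = 1 := by
    have h1 : w ρ = ((nval v ρ * p : ℤ) : WithTop ℤ) := key ρ hρ0
    rw [hρ] at h1
    have : (1 : ℤ) = nval v ρ * p := by exact_mod_cast h1
    have : p * nval v ρ = 1 := by linarith [mul_comm (nval v ρ) p]
    exact Int.eq_one_of_mul_eq_one_right hp0 this
  ext x
  by_cases hx : x = 0
  · rw [hx, v.map_zero, w.map_zero]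
  · rw [key x hx, hp1, mul_one, coe_nval v hx]

end Stmt13Aux

namespace Stmt13Aux

variable {G : Type*} [Field G]

lemma nval_pos {v : AddValuation G (WithTop ℤ)} {x : G} (hx : x ≠ 0) (h : 0 < v x) :
    1 ≤ nval v x := by
  rw [coe_nval v hx] at h
  exact_mod_cast h

lemma nval_neg {v : AddValuation G (WithTop ℤ)} {x : G} (h : v x < 0) :
    nval v x ≤ -1 := by
  have hx : x ≠ 0 := by
    intro hx0; rw [hx0, v.map_zero] at h; exact absurd h (by simp)
  rw [coe_nval v hx] at h
  have : (nval v x : ℤ) < 0 := by exact_mod_cast h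
  omega

/-- value of `z^N / (1 + z^N)` at a valuation negative on `z`. -/
lemma val_u_neg (w : AddValuation G (WithTop ℤ)) {z : G} {N : ℕ} (hN : 0 < N)
    (h : w z < 0) : w (z ^ N / (1 + z ^ N)) = 0 := by
  have hz0 : z ≠ 0 := by
    intro h0; rw [h0, w.map_zero] at h; exact absurd h (by simp)
  have hzc : w z = ((nval w z : ℤ) : WithTop ℤ) := coe_nval w hz0
  have he : nval w z ≤ -1 := nval_neg h
  have hpow : w (z ^ N) = ((N * nval w z : ℤ) : WithTop ℤ) := val_pow w hzc N
  have hlt : w (z ^ N) < w 1 := by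
    rw [hpow, w.map_one]
    exact_mod_cast (by nlinarith [Int.ofNat_le.mpr hN] : (N : ℤ) * nval w z < 0)
  rw [w.map_div, w.map_add_eq_of_lt_right hlt, hpow,
    ← WithTop.LinearOrderedAddCommGroup.coe_sub, sub_self]
  rfl

/-- value of `z^N / (1 + z^N)` at a valuation positive on `z`. -/
lemma val_u_pos (w : AddValuation G (WithTop ℤ)) {z : G} (hz0 : z ≠ 0) {N : ℕ} (hN : 0 < N)
    (h : 0 < w z) : w (z ^ N / (1 + z ^ N)) = ((N * nval w z : ℤ) : WithTop ℤ) := by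
  have hzc : w z = ((nval w z : ℤ) : WithTop ℤ) := coe_nval w hz0
  have he : 1 ≤ nval w z := nval_pos hz0 h
  have hpow : w (z ^ N) = ((N * nval w z : ℤ) : WithTop ℤ) := val_pow w hzc N
  have hlt : w 1 < w (z ^ N) := by
    rw [hpow, w.map_one]
    exact_mod_cast (by nlinarith [Int.ofNat_le.mpr hN] : (0:ℤ) < (N : ℤ) * nval w z)
  rw [w.map_div, w.map_add_eq_of_lt_left hlt, w.map_one, hpow, sub_zero]

end Stmt13Aux

namespace Stmt13Aux

variable {G : Type*} [Field G]

lemma pairSep {v w : AddValuation G (WithTop ℤ)} (hv : Surj v) (hw : Surj w)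
    (hne : v ≠ w) : ∃ z : G, v z < 0 ∧ 0 < w z := by
  -- a separating element
  have hsep : ∃ x : G, ¬ (0 ≤ v x ↔ 0 ≤ w x) := by
    by_contra hcon
    push_neg at hcon
    exact hne (eq_of_same_ring hv hw hcon)
  obtain ⟨x, hx⟩ := hsep
  -- reduce to: y ≠ 0 with (v y ≤ 0 < w y) or (v y < 0 ≤ w y)
  have main : ∀ y : G, y ≠ 0 →
      ((v y ≤ 0 ∧ 0 < w y) ∨ (v y < 0 ∧ 0 ≤ w y)) → ∃ z : G, v z < 0 ∧ 0 < w z := by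
    rintro y hy0 (⟨h1, h2⟩ | ⟨h1, h2⟩)
    · -- use z = y^N / π
      obtain ⟨π, hπ⟩ := hv (1 : ℤ)
      have hπ0 : π ≠ 0 := fun h0 => by
        rw [h0, v.map_zero] at hπ; exact WithTop.top_ne_coe hπ
      have hyv : v y = ((nval v y : ℤ) : WithTop ℤ) := coe_nval v hy0
      have hyw : w y = ((nval w y : ℤ) : WithTop ℤ) := coe_nval w hy0
      have hev : nval v y ≤ 0 := by rw [hyv] at h1; exact_mod_cast h1
      have hfw : 1 ≤ nval w y := nval_pos hy0 h2
      have hπw : w π = ((nval w π : ℤ) : WithTop ℤ) := coe_nval w hπ0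
      set N : ℕ := (nval w π).natAbs + 1 with hN
      refine ⟨y ^ N / π, ?_, ?_⟩
      · rw [v.map_div, val_pow v hyv, hπ, ← WithTop.LinearOrderedAddCommGroup.coe_sub]
        have hmul : (N:ℤ) * nval v y ≤ (N:ℤ) * 0 :=
          mul_le_mul_of_nonneg_left hev (by positivity)
        exact_mod_cast (by linarith : (N:ℤ) * nval v y - 1 < 0)
      · rw [w.map_div, val_pow w hyw, hπw, ← WithTop.LinearOrderedAddCommGroup.coe_sub]
        have hNge : (N:ℤ) = |nval w π| + 1 := by
          rw [hN]; push_cast [Int.natCast_natAbs]; ring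
        exact_mod_cast (by nlinarith [abs_nonneg (nval w π), le_abs_self (nval w π)] :
          (0:ℤ) < (N:ℤ) * nval w y - nval w π)
    · -- use z = y^N * ρ
      obtain ⟨ρ, hρ⟩ := hw (1 : ℤ)
      have hρ0 : ρ ≠ 0 := fun h0 => by
        rw [h0, w.map_zero] at hρ; exact WithTop.top_ne_coe hρ
      have hyv : v y = ((nval v y : ℤ) : WithTop ℤ) := coe_nval v hy0
      have hyw : w y = ((nval w y : ℤ) : WithTop ℤ) := coe_nval w hy0
      have hev : nval v y ≤ -1 := nval_neg h1
      have hfw : 0 ≤ nval w y := by rw [hyw] at h2; exact_mod_cast h2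
      have hρv : v ρ = ((nval v ρ : ℤ) : WithTop ℤ) := coe_nval v hρ0
      set N : ℕ := (nval v ρ).natAbs + 1 with hN
      refine ⟨y ^ N * ρ, ?_, ?_⟩
      · rw [v.map_mul, val_pow v hyv, hρv, ← WithTop.coe_add]
        have hNge : (N:ℤ) = |nval v ρ| + 1 := by
          rw [hN]; push_cast [Int.natCast_natAbs]; ring
        have hmul : (N:ℤ) * nval v y ≤ (N:ℤ) * (-1) :=
          mul_le_mul_of_nonneg_left hev (by positivity)
        exact_mod_cast (by linarith [le_abs_self (nval v ρ)] :
          (N:ℤ) * nval v y + nval v ρ < 0)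
      · rw [w.map_mul, val_pow w hyw, hρ, ← WithTop.coe_add]
        exact_mod_cast (by positivity : (0:ℤ) < (N:ℤ) * nval w y + 1)
  by_cases hvx : 0 ≤ v x
  · have hwx : w x < 0 := by
      by_contra hc
      exact hx ⟨fun _ => not_lt.mp hc, fun _ => hvx⟩
    have hx0 : x ≠ 0 := by
      intro h0; rw [h0, w.map_zero] at hwx; exact absurd hwx (by simp)
    refine main x⁻¹ (inv_ne_zero hx0) (Or.inl ⟨?_, ?_⟩)
    · rw [v.map_inv]
      rw [coe_nval v hx0] at hvx ⊢
      rw [← WithTop.LinearOrderedAddCommGroup.coe_neg]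
      have : (0:ℤ) ≤ nval v x := by exact_mod_cast hvx
      exact_mod_cast (by omega : -nval v x ≤ 0)
    · rw [w.map_inv]
      rw [coe_nval w hx0] at hwx ⊢
      rw [← WithTop.LinearOrderedAddCommGroup.coe_neg]
      have : nval w x < 0 := by exact_mod_cast hwx
      exact_mod_cast (by omega : (0:ℤ) < -nval w x)
  · have hwx : 0 ≤ w x := by
      by_contra hc
      exact hx ⟨fun h => absurd h hvx, fun h => absurd h hc⟩
    have hx0 : x ≠ 0 := by
      intro h0; rw [h0, v.map_zero] at hvx; exact hvx le_top
    exact main x hx0 (Or.inr ⟨not_le.mp hvx, hwx⟩)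

end Stmt13Aux

namespace Stmt13Aux

variable {G : Type*} [Field G]

lemma claim1 (v : AddValuation G (WithTop ℤ)) (hv : Surj v)
    (S : Finset (AddValuation G (WithTop ℤ))) (hS : ∀ w ∈ S, Surj w)
    (hne : ∀ w ∈ S, v ≠ w) :
    ∃ z : G, v z < 0 ∧ ∀ w ∈ S, 0 < w z := by
  classical
  induction S using Finset.induction with
  | empty =>
    obtain ⟨π, hπ⟩ := hv (1 : ℤ)
    refine ⟨π⁻¹, ?_, by simp⟩
    rw [v.map_inv, hπ, ← WithTop.LinearOrderedAddCommGroup.coe_neg]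
    exact_mod_cast (by norm_num : (-1 : ℤ) < 0)
  | @insert w₀ S hw₀S ih =>
    obtain ⟨z', hvz', hSz'⟩ := ih (fun w hw => hS w (Finset.mem_insert_of_mem hw))
      (fun w hw => hne w (Finset.mem_insert_of_mem hw))
    obtain ⟨t, hvt, hw₀t⟩ := pairSep hv (hS w₀ (Finset.mem_insert_self _ _))
      (hne w₀ (Finset.mem_insert_self _ _))
    have hz'0 : z' ≠ 0 := by
      intro h0; rw [h0, v.map_zero] at hvz'; exact absurd hvz' (by simp)
    have ht0 : t ≠ 0 := by
      intro h0; rw [h0, v.map_zero] at hvt; exact absurd hvt (by simp)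
    set N : ℕ := 1 + ∑ w ∈ S, (nval w t).natAbs with hNdef
    have hN : 0 < N := by omega
    have hNbd : ∀ w ∈ S, |nval w t| + 1 ≤ (N:ℤ) := by
      intro w hw
      have h1 : (nval w t).natAbs ≤ ∑ w ∈ S, (nval w t).natAbs :=
        Finset.single_le_sum (f := fun w => (nval w t).natAbs) (fun _ _ => Nat.zero_le _) hw
      have : ((nval w t).natAbs : ℤ) = |nval w t| := Int.natCast_natAbs _
      omega
    rcases lt_trichotomy (w₀ z') 0 with hcase | hcase | hcase
    · -- w₀ z' < 0 : use z = t * (z'^N/(1+z'^N))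
      refine ⟨t * (z' ^ N / (1 + z' ^ N)), ?_, ?_⟩
      · rw [v.map_mul, val_u_neg v hN hvz', add_zero]; exact hvt
      · intro w hw
        rcases Finset.mem_insert.mp hw with rfl | hw
        · rw [w.map_mul, val_u_neg w hN hcase, add_zero]; exact hw₀t
        · have hwz' : 0 < w z' := hSz' w hw
          rw [w.map_mul, val_u_pos w hz'0 hN hwz', coe_nval w ht0, ← WithTop.coe_add]
          have h1 : 1 ≤ nval w z' := nval_pos hz'0 hwz'
          have h2 := hNbd w hw
          have h3 : (N:ℤ) ≤ (N:ℤ) * nval w z' := by nlinarith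
          exact_mod_cast (by linarith [le_abs_self (nval w t), neg_abs_le (nval w t)] :
            (0:ℤ) < nval w t + (N:ℤ) * nval w z')
    · -- w₀ z' = 0 : use z = z'^N * t
      refine ⟨z' ^ N * t, ?_, ?_⟩
      · rw [v.map_mul, val_pow v (coe_nval v hz'0), coe_nval v ht0, ← WithTop.coe_add]
        have h1 : nval v z' ≤ -1 := nval_neg hvz'
        have h2 : nval v t ≤ -1 := nval_neg hvt
        have h3 : (N:ℤ) * nval v z' ≤ (N:ℤ) * (-1) := mul_le_mul_of_nonneg_left h1 (by positivity)
        exact_mod_cast (by linarith : (N:ℤ) * nval v z' + nval v t < 0)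
      · intro w hw
        rcases Finset.mem_insert.mp hw with rfl | hw
        · rw [w.map_mul, w.map_pow, hcase, smul_zero, zero_add]; exact hw₀t
        · have hwz' : 0 < w z' := hSz' w hw
          rw [w.map_mul, val_pow w (coe_nval w hz'0), coe_nval w ht0, ← WithTop.coe_add]
          have h1 : 1 ≤ nval w z' := nval_pos hz'0 hwz'
          have h2 := hNbd w hw
          have h3 : (N:ℤ) ≤ (N:ℤ) * nval w z' := by nlinarith
          exact_mod_cast (by linarith [neg_abs_le (nval w t)] :
            (0:ℤ) < (N:ℤ) * nval w z' + nval w t)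
    · -- 0 < w₀ z' : z' works
      refine ⟨z', hvz', ?_⟩
      intro w hw
      rcases Finset.mem_insert.mp hw with rfl | hw
      · exact hcase
      · exact hSz' w hw

end Stmt13Aux

namespace Stmt13Aux

variable {G : Type*} [Field G]

/-- Weak approximation: prescribe the values of finitely many distinct normalized
valuations simultaneously. -/
lemma approx (S : Finset (AddValuation G (WithTop ℤ))) (hS : ∀ w ∈ S, Surj w)
    (e : AddValuation G (WithTop ℤ) → ℤ) :
    ∃ x : G, ∀ v ∈ S, v x = ((e v : ℤ) : WithTop ℤ) := by
  classical
  have hzex : ∀ v ∈ S, ∃ z : G, v z < 0 ∧ ∀ w ∈ S.erase v, 0 < w z := by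
    intro v hv
    exact claim1 v (hS v hv) (S.erase v) (fun w hw => hS w (Finset.mem_of_mem_erase hw))
      (fun w hw => (Finset.ne_of_mem_erase hw).symm)
  choose! z hz1 hz2 using hzex
  have htex : ∀ v ∈ S, ∃ t : G, v t = ((e v : ℤ) : WithTop ℤ) := fun v hv => hS v hv (e v)
  choose! t ht using htex
  have hz0 : ∀ v ∈ S, z v ≠ 0 := by
    intro v hv h0
    have := hz1 v hv
    rw [h0, v.map_zero] at this
    exact absurd this (by simp)
  have ht0 : ∀ v ∈ S, t v ≠ 0 := by
    intro v hv h0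
    have := ht v hv
    rw [h0, v.map_zero] at this
    exact WithTop.top_ne_coe this
  set N : ℕ := 1 + ∑ v ∈ S, ∑ w ∈ S, ((nval v (t w)).natAbs + (e v).natAbs) with hNdef
  have hN : 0 < N := by omega
  have hbd : ∀ v ∈ S, ∀ w ∈ S, |nval v (t w)| + |e v| + 1 ≤ (N:ℤ) := by
    intro v hv w hw
    have h1 : (nval v (t w)).natAbs + (e v).natAbs
        ≤ ∑ w ∈ S, ((nval v (t w)).natAbs + (e v).natAbs) :=
      Finset.single_le_sum (f := fun w => (nval v (t w)).natAbs + (e v).natAbs)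
        (fun _ _ => Nat.zero_le _) hw
    have h2 : ∑ w ∈ S, ((nval v (t w)).natAbs + (e v).natAbs)
        ≤ ∑ v ∈ S, ∑ w ∈ S, ((nval v (t w)).natAbs + (e v).natAbs) :=
      Finset.single_le_sum (f := fun v => ∑ w ∈ S, ((nval v (t w)).natAbs + (e v).natAbs))
        (fun _ _ => Nat.zero_le _) hv
    have e1 : ((nval v (t w)).natAbs : ℤ) = |nval v (t w)| := Int.natCast_natAbs _
    have e2 : ((e v).natAbs : ℤ) = |e v| := Int.natCast_natAbs _
    omega
  refine ⟨∑ w ∈ S, t w * (z w ^ N / (1 + z w ^ N)), ?_⟩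
  intro v hv
  rw [← Finset.add_sum_erase S _ hv]
  have hmain : v (t v * (z v ^ N / (1 + z v ^ N))) = ((e v : ℤ) : WithTop ℤ) := by
    rw [v.map_mul, val_u_neg v hN (hz1 v hv), add_zero, ht v hv]
  have hrest : ((e v : ℤ) : WithTop ℤ) < v (∑ w ∈ S.erase v, t w * (z w ^ N / (1 + z w ^ N))) := by
    refine v.map_lt_sum (by simp) ?_
    intro w hw
    have hwS : w ∈ S := Finset.mem_of_mem_erase hw
    have hvw : v ≠ w := fun h => (Finset.ne_of_mem_erase hw) h.symm
    have hvzw : 0 < v (z w) := hz2 w hwS v (Finset.mem_erase.mpr ⟨hvw, hv⟩)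
    rw [v.map_mul, val_u_pos v (hz0 w hwS) hN hvzw, coe_nval v (ht0 w hwS), ← WithTop.coe_add]
    have h1 : 1 ≤ nval v (z w) := nval_pos (hz0 w hwS) hvzw
    have h2 := hbd v hv w hwS
    have h3 : (N:ℤ) ≤ (N:ℤ) * nval v (z w) := by nlinarith
    exact_mod_cast (by linarith [neg_abs_le (nval v (t w)), le_abs_self (e v)] :
      (e v : ℤ) < nval v (t w) + (N:ℤ) * nval v (z w))
  rw [v.map_add_eq_of_lt_left (hmain ▸ hrest), hmain]

end Stmt13Aux

namespace Stmt13Aux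

variable {C G : Type*} [Field C] [Field G] [Algebra C G] {m k : ℕ}
  (c : Fin m → C) (b : Fin k → C) (n : Fin m → ℕ) (j : Fin k → ℕ)

lemma ratEval_ne_zero {x : G} (hx : ∀ α : C, x ≠ algebraMap C G α) :
    ratEval c b n j x ≠ 0 := by
  have hnum : ∀ (l : ℕ) (f : Fin l → C) (g : Fin l → ℕ),
      (∏ i, (x - algebraMap C G (f i)) ^ g i) ≠ 0 := by
    intro l f g
    refine Finset.prod_ne_zero_iff.mpr fun i _ => pow_ne_zero _ (sub_ne_zero.mpr (hx (f i)))
  exact div_ne_zero (hnum m c n) (hnum k b j)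

lemma ratEval_val (v : AddValuation G (WithTop ℤ))
    (hv0 : ∀ y : C, y ≠ 0 → v (algebraMap C G y) = 0) {x : G} {E : ℤ}
    (hx : v x = (E : WithTop ℤ)) (hE : E < 0) :
    v (ratEval c b n j x)
      = ((((∑ i, (n i : ℤ)) - ∑ i, (j i : ℤ)) * E : ℤ) : WithTop ℤ) := by
  have hfac : ∀ α : C, v (x - algebraMap C G α) = (E : WithTop ℤ) := by
    intro α
    by_cases hα : α = 0
    · simp [hα, hx]
    · refine (v.map_sub_eq_of_lt_left ?_).trans hx
      rw [hx, hv0 α hα]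
      exact_mod_cast hE
  have hprod : ∀ (l : ℕ) (f : Fin l → C) (g : Fin l → ℕ),
      v (∏ i, (x - algebraMap C G (f i)) ^ g i) = (((∑ i, (g i : ℤ)) * E : ℤ) : WithTop ℤ) := by
    intro l f g
    rw [val_prod]
    have : ∀ i : Fin l, v ((x - algebraMap C G (f i)) ^ g i) = (((g i : ℤ) * E : ℤ) : WithTop ℤ) :=
      fun i => val_pow v (hfac (f i)) (g i)
    rw [Finset.sum_congr rfl fun i _ => this i, ← WithTop.coe_sum]
    norm_cast
    push_cast
    rw [Finset.sum_mul]
  rw [ratEval, v.map_div, hprod m c n, hprod k b j,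
    ← WithTop.LinearOrderedAddCommGroup.coe_sub]
  congr 1
  ring

end Stmt13Aux


open Stmt13Aux

/-- Lemma `le:canfind`: Let `G` be a one-variable function field over
the constant field `C` (a finite extension of `C(t)`, `t` transcendental over `C`, with
`C` algebraically closed in `G`), where primes of `G` are identified with their normalized
discrete valuations (surjective onto `ℤ` and trivial on `C`).  Let
`R(T) = ∏ (T - cᵢ)^{nᵢ} / ∏ (T - bᵢ)^{jᵢ}` over `C` as usual, and let `q` be a prime with
`deg A > deg B` and `deg A - deg B ≢ 0 (mod q)`.  Let `a ∈ G ∖ C` and let `𝒯` be a finite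
set of primes of `G` containing a pole `𝔱` of `a`.  Then there is `b ∈ G ∖ C` with
`ord_𝔱(R(b)) ≢ 0 (mod q)`, while `ord_p(R(a)^q - R(b)) ≡ 0 (mod q)` and
`ord_p(R(a)^q - R(b)⁻¹) ≡ 0 (mod q)` for every `p ∈ 𝒯`. -/
theorem stmt_13 (C G : Type*) [Field C] [Field G] [Algebra C G]
    (t : G) (ht : Transcendental C t)
    (hfin : FiniteDimensional ↥(IntermediateField.adjoin C {t}) G)
    (hconst : ∀ x : G, IsAlgebraic C x → x ∈ Set.range (algebraMap C G))
    (m k : ℕ) (c : Fin m → C) (b : Fin k → C) (n : Fin m → ℕ) (j : Fin k → ℕ)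
    (hdist : Function.Injective (Sum.elim c b))
    (hn : ∀ i, 0 < n i) (hj : ∀ i, 0 < j i)
    (q : ℕ) (hq : q.Prime)
    (hdeg : ¬ (q : ℤ) ∣ ((∑ i, (n i : ℤ)) - ∑ i, (j i : ℤ)))
    (hdeg' : (∑ i, (j i : ℤ)) < ∑ i, (n i : ℤ))
    (a : G) (ha : a ∉ Set.range (algebraMap C G))
    (T : Set (AddValuation G (WithTop ℤ))) (hTfin : T.Finite)
    (hT : ∀ v ∈ T, (∀ z : ℤ, ∃ x : G, v x = (z : WithTop ℤ)) ∧
      (∀ x : C, x ≠ 0 → v (algebraMap C G x) = 0))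
    (𝔱 : AddValuation G (WithTop ℤ)) (h𝔱 : 𝔱 ∈ T) (hpole : 𝔱 a < 0) :
    ∃ b₀ : G, b₀ ∉ Set.range (algebraMap C G) ∧
      ¬ valDvd q (𝔱 (ratEval c b n j b₀)) ∧
      ∀ v ∈ T, valDvd q (v (ratEval c b n j a ^ q - ratEval c b n j b₀)) ∧
        valDvd q (v (ratEval c b n j a ^ q - (ratEval c b n j b₀)⁻¹)) := by
  classical
  set D : ℤ := (∑ i, (n i : ℤ)) - ∑ i, (j i : ℤ) with hDdef
  have hD1 : 1 ≤ D := by omega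
  have hq2 : 2 ≤ (q : ℤ) := by exact_mod_cast hq.two_le
  set Tf := hTfin.toFinset with hTfdef
  have hmem : ∀ v, v ∈ Tf ↔ v ∈ T := fun v => hTfin.mem_toFinset
  have hsurj : ∀ v ∈ Tf, Surj v := fun v hv => (hT v ((hmem v).mp hv)).1
  have hconst' : ∀ v ∈ Tf, ∀ y : C, y ≠ 0 → v (algebraMap C G y) = 0 :=
    fun v hv => (hT v ((hmem v).mp hv)).2
  have h𝔱f : 𝔱 ∈ Tf := (hmem 𝔱).mpr h𝔱
  have haC : ∀ α : C, a ≠ algebraMap C G α := fun α h => ha ⟨α, h.symm⟩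
  have ha0 : a ≠ 0 := fun h => haC 0 (by simp [h])
  set Ra := ratEval c b n j a with hRadef
  have hRa0 : Ra ≠ 0 := ratEval_ne_zero c b n j haC
  set K : ℤ := 1 + ((∑ v ∈ Tf, (nval v Ra).natAbs : ℕ) : ℤ) with hKdef
  have hK1 : 1 ≤ K := by
    have : (0:ℤ) ≤ ((∑ v ∈ Tf, (nval v Ra).natAbs : ℕ) : ℤ) := Int.natCast_nonneg _
    omega
  have hKbd : ∀ v ∈ Tf, |nval v Ra| < K := by
    intro v hv
    have h1 : (nval v Ra).natAbs ≤ ∑ v ∈ Tf, (nval v Ra).natAbs :=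
      Finset.single_le_sum (f := fun v => (nval v Ra).natAbs) (fun _ _ => Nat.zero_le _) hv
    have e1 : ((nval v Ra).natAbs : ℤ) = |nval v Ra| := Int.natCast_natAbs _
    omega
  set e : AddValuation G (WithTop ℤ) → ℤ :=
    fun v => if v = 𝔱 then -1 else -((q : ℤ) * K) with hedef
  have heneg : ∀ v, e v < 0 := by
    intro v
    rw [hedef]
    dsimp only
    split
    · norm_num
    · nlinarith
  obtain ⟨b₀, hb₀⟩ := approx Tf hsurj e
  have hb₀𝔱 : 𝔱 b₀ = ((-1 : ℤ) : WithTop ℤ) := by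
    rw [hb₀ 𝔱 h𝔱f, hedef]; simp
  have hb₀0 : b₀ ≠ 0 := by
    intro h0; rw [h0, 𝔱.map_zero] at hb₀𝔱; exact WithTop.top_ne_coe hb₀𝔱
  have hb₀C : b₀ ∉ Set.range (algebraMap C G) := by
    rintro ⟨α, rfl⟩
    have hα : α ≠ 0 := by
      intro h0; rw [h0, map_zero] at hb₀0; exact hb₀0 rfl
    rw [hconst' 𝔱 h𝔱f α hα] at hb₀𝔱
    exact absurd hb₀𝔱.symm (by exact_mod_cast (by norm_num : (-1 : ℤ) ≠ 0))
  set Rb := ratEval c b n j b₀ with hRbdef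
  have hvRb : ∀ v ∈ Tf, v Rb = ((D * e v : ℤ) : WithTop ℤ) := by
    intro v hv
    have := ratEval_val c b n j v (hconst' v hv) (hb₀ v hv) (heneg v)
    rw [hRbdef, this, hDdef]
  refine ⟨b₀, hb₀C, ?_, ?_⟩
  · -- ord_𝔱 (R b₀) is not divisible by q
    rw [← hRbdef, hvRb 𝔱 h𝔱f]
    rintro ⟨z, hz, hdvd⟩
    have hz' : D * e 𝔱 = z := by exact_mod_cast hz
    have h1 : e 𝔱 = -1 := by rw [hedef]; simp
    rw [h1] at hz'
    apply hdeg
    have : (q : ℤ) ∣ -D := by rw [← hz'] at hdvd; simpa using hdvd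
    exact (Int.dvd_neg).mp this
  · intro v hvT
    have hv : v ∈ Tf := (hmem v).mpr hvT
    have hvRa : v Ra = ((nval v Ra : ℤ) : WithTop ℤ) := coe_nval v hRa0
    set r : ℤ := nval v Ra with hrdef
    have hvRaq : v (Ra ^ q) = (((q : ℤ) * r : ℤ) : WithTop ℤ) := val_pow v hvRa q
    have hvRbv := hvRb v hv
    have hvRbinv : v Rb⁻¹ = ((-(D * e v) : ℤ) : WithTop ℤ) := by
      rw [v.map_inv, hvRbv, ← WithTop.LinearOrderedAddCommGroup.coe_neg]
    by_cases hv𝔱 : v = 𝔱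
    · subst hv𝔱
      -- at the pole of a
      have hta : v a = ((nval v a : ℤ) : WithTop ℤ) := coe_nval v ha0
      set ta : ℤ := nval v a with htadef
      have hta1 : ta ≤ -1 := nval_neg hpole
      have hvRa' : v Ra = ((D * ta : ℤ) : WithTop ℤ) := by
        rw [hRadef, ratEval_val c b n j v (hconst' v hv) hta (by omega), hDdef]
      have hr : r = D * ta := by
        rw [hrdef] at hvRa
        rw [hvRa] at hvRa'
        exact_mod_cast hvRa'
      have he𝔱 : e v = -1 := by rw [hedef]; simp
      have hA : (q:ℤ)*D*ta ≤ (q:ℤ)*D*(-1) :=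
        mul_le_mul_of_nonneg_left hta1 (by positivity)
      have hB : 2*D ≤ (q:ℤ)*D := mul_le_mul_of_nonneg_right hq2 (by linarith)
      have hqr : (q : ℤ) * r < D * e v := by
        rw [hr, he𝔱]; nlinarith
      have hqr' : (q : ℤ) * r < -(D * e v) := by
        rw [hr, he𝔱]; nlinarith
      constructor
      · rw [v.map_sub_eq_of_lt_left (by rw [hvRaq, hvRbv]; exact_mod_cast hqr), hvRaq]
        exact ⟨(q : ℤ) * r, rfl, ⟨r, rfl⟩⟩
      · rw [v.map_sub_eq_of_lt_left (by rw [hvRaq, hvRbinv]; exact_mod_cast hqr'), hvRaq]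
        exact ⟨(q : ℤ) * r, rfl, ⟨r, rfl⟩⟩
    · have he : e v = -((q : ℤ) * K) := by rw [hedef]; simp [hv𝔱]
      have habs := hKbd v hv
      rw [← hrdef] at habs
      have hDK : |r| < D * K := by
        have hK0 : K ≤ D * K := le_mul_of_one_le_left (by linarith) hD1
        linarith
      have hq0 : (0:ℤ) < (q:ℤ) := by linarith
      have h1 : D * e v < (q : ℤ) * r := by
        rw [he]
        have h4 : (q:ℤ) * (-r) < (q:ℤ) * (D * K) :=
          mul_lt_mul_of_pos_left (by linarith [neg_abs_le r]) hq0
        nlinarith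
      have h2 : (q : ℤ) * r < -(D * e v) := by
        rw [he]
        have h4 : (q:ℤ) * r < (q:ℤ) * (D * K) :=
          mul_lt_mul_of_pos_left (by linarith [le_abs_self r]) hq0
        nlinarith
      constructor
      · rw [v.map_sub_eq_of_lt_right (by rw [hvRaq, hvRbv]; exact_mod_cast h1), hvRbv, he]
        exact ⟨D * -((q : ℤ) * K), rfl, ⟨-(D * K), by ring⟩⟩
      · rw [v.map_sub_eq_of_lt_left (by rw [hvRaq, hvRbinv]; exact_mod_cast h2), hvRaq]
        exact ⟨(q : ℤ) * r, rfl, ⟨r, rfl⟩⟩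
end
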